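/- Let uv be an edge of a finite simple graph G and let H be the 3-subdivision of uv, with new vertices u′, w, v′. Then: (i) if v belongs to some minimum dominating set of G, then u′ belongs to some minimum dominating set of H; (ii) if u belongs to some minimum dominating set of G, then v′ belongs to some minimum dominating set of H; (iii) if the edge uv is not γ-critical in G (i.e., γ(G − uv) = γ(G)), then w belongs to some minimum dominating set of H. -/

import Mathlib

open SimpleGraph

/-- `S` is a dominating set of `G`. -/
def IsDomSet {V : Type*} (G : SimpleGraph V) (S : Finset V) : Prop :=
  ∀ v : V, v ∈ S ∨ ∃ u ∈ S, G.Adj u v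

/-- The domination number `γ(G)`. -/
noncomputable def domNum {V : Type*} (G : SimpleGraph V) : ℕ :=
  sInf {n | ∃ S : Finset V, IsDomSet G S ∧ S.card = n}

/-- `C` is a vertex cover of `G`. -/
def IsVC {V : Type*} (G : SimpleGraph V) (C : Finset V) : Prop :=
  ∀ e ∈ G.edgeSet, ∃ x ∈ C, x ∈ e

/-- The vertex cover number `τ(G)`. -/
noncomputable def tau {V : Type*} (G : SimpleGraph V) : ℕ :=
  sInf {n | ∃ C : Finset V, IsVC G C ∧ C.card = n}

/-- `S` is an independent set of `G`. -/
def IsIndep {V : Type*} (G : SimpleGraph V) (S : Finset V) : Prop :=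
  ∀ a ∈ S, ∀ b ∈ S, ¬ G.Adj a b

/-- The independence number `α(G)`. -/
noncomputable def indepNum {V : Type*} (G : SimpleGraph V) : ℕ :=
  sSup {n | ∃ S : Finset V, IsIndep G S ∧ S.card = n}

/-- The bondage number `b(G)`. -/
noncomputable def bondage {V : Type*} (G : SimpleGraph V) : ℕ :=
  sInf {n | ∃ E' : Finset (Sym2 V), ↑E' ⊆ G.edgeSet ∧ E'.card = n ∧
    domNum (G.deleteEdges ↑E') = domNum G + 1}

/-- The graph `G_v+u` obtained from `G` by adding one new vertex (`none`) adjacent only to `v`. -/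
def addLeaf {V : Type*} (G : SimpleGraph V) (v : V) : SimpleGraph (Option V) :=
  SimpleGraph.fromRel (fun x y =>
    (∃ a b, x = some a ∧ y = some b ∧ G.Adj a b) ∨ (x = some v ∧ y = none))

/-- The graph `G_A+` obtained from `G` by adding, for each `v ∈ A`, one new pendant
vertex adjacent only to `v`. -/
def addLeaves {V : Type*} (G : SimpleGraph V) (A : Finset V) :
    SimpleGraph (V ⊕ {x // x ∈ A}) :=
  SimpleGraph.fromRel (fun x y =>
    (∃ a b, x = Sum.inl a ∧ y = Sum.inl b ∧ G.Adj a b) ∨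
    (∃ a : {x // x ∈ A}, x = Sum.inl a.1 ∧ y = Sum.inr a))

/-- The `3`-subdivision of the edge `uv` of `G`: the edge `uv` is deleted, three new
vertices `u' = Sum.inr 0`, `w = Sum.inr 1`, `v' = Sum.inr 2` are added, together with the
four edges `u u'`, `u' w`, `w v'`, `v' v`. -/
def subdiv3 {V : Type*} (G : SimpleGraph V) (u v : V) : SimpleGraph (V ⊕ Fin 3) :=
  SimpleGraph.fromRel (fun x y =>
    match x, y with
    | Sum.inl a, Sum.inl b => G.Adj a b ∧ s(a, b) ≠ s(u, v)
    | Sum.inl a, Sum.inr i => (a = u ∧ i = 0) ∨ (a = v ∧ i = 2)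
    | Sum.inr i, Sum.inr j => (i = 0 ∧ j = 1) ∨ (i = 1 ∧ j = 2)
    | _, _ => False)

/-!
A dominating set `T` of `H` must contain one of `u'`, `w`, `v'`, since these are the only
neighbours of `w`. If it contains two of them, `T ∩ V` together with `u` dominates `G`; if it
contains only `u'` (say), then `v'` is dominated by `v ∈ T`, and `v` dominates `u` in `G`, so
`T ∩ V` already dominates `G`. Hence `γ(H) ≥ γ(G) + 1`. Conversely, a dominating set of `G`
containing `v` (resp. `u`) extended by `u'` (resp. `v'`), and a dominating set of `G - uv`
extended by `w`, dominate `H`. A minimum dominating set of `G` falls in one of these cases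
(if it avoids `u` and `v`, it dominates `G - uv`), so `γ(H) = γ(G) + 1`, and the three
extensions in the theorem are minimum dominating sets of `H`.
-/

section Domination

variable {V : Type*} {G : SimpleGraph V}

theorem domNum_le_card {S : Finset V} (hS : IsDomSet G S) : domNum G ≤ S.card :=
  Nat.sInf_le ⟨S, hS, rfl⟩

theorem exists_isDomSet_card_eq_domNum [Fintype V] (G : SimpleGraph V) :
    ∃ S : Finset V, IsDomSet G S ∧ S.card = domNum G :=
  Nat.sInf_mem (s := {n | ∃ S : Finset V, IsDomSet G S ∧ S.card = n})
    ⟨_, Finset.univ, fun x => Or.inl (Finset.mem_univ x), rfl⟩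

theorem IsDomSet.map {W : Type*} {G' : SimpleGraph W} (e : G ≃g G') {S : Finset V}
    (hS : IsDomSet G S) : IsDomSet G' (S.map e.toEquiv.toEmbedding) := by
  intro y
  obtain ⟨x, rfl⟩ := e.surjective y
  rcases hS x with hx | ⟨z, hz, hzx⟩
  · exact Or.inl (Finset.mem_map_of_mem _ hx)
  · exact Or.inr ⟨e z, Finset.mem_map_of_mem _ hz, e.map_adj_iff.mpr hzx⟩

theorem IsDomSet.deleteEdges_of_notMem {S : Finset V} (hS : IsDomSet G S) {u v : V}
    (hu : u ∉ S) (hv : v ∉ S) : IsDomSet (G.deleteEdges {s(u, v)}) S := by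
  intro x
  rcases hS x with hx | ⟨z, hz, hzx⟩
  · exact Or.inl hx
  · refine Or.inr ⟨z, hz, deleteEdges_adj.mpr ⟨hzx, ?_⟩⟩
    rw [Set.mem_singleton_iff, Sym2.eq_iff]
    rintro (⟨rfl, -⟩ | ⟨rfl, -⟩)
    exacts [hu hz, hv hz]

end Domination

section Subdivision

variable {V : Type*} {G : SimpleGraph V} {u v : V}

@[simp]
theorem subdiv3_adj_inl_inl {a b : V} :
    (subdiv3 G u v).Adj (.inl a) (.inl b) ↔ G.Adj a b ∧ s(a, b) ≠ s(u, v) := by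
  simp only [subdiv3, fromRel_adj, ne_eq, Sum.inl.injEq]
  constructor
  · rintro ⟨-, h | ⟨hba, hne⟩⟩
    · exact h
    · exact ⟨hba.symm, by rwa [Sym2.eq_swap]⟩
  · intro h
    exact ⟨h.1.ne, Or.inl h⟩

@[simp]
theorem subdiv3_adj_inr_inl {i : Fin 3} {a : V} :
    (subdiv3 G u v).Adj (.inr i) (.inl a) ↔ (a = u ∧ i = 0) ∨ (a = v ∧ i = 2) := by
  simp [subdiv3]

def subdiv3Swap (G : SimpleGraph V) (u v : V) : subdiv3 G u v ≃g subdiv3 G v u where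
  toEquiv := Equiv.sumCongr (Equiv.refl V) Fin.revPerm
  map_rel_iff' := by
    rintro (a | i) (b | j)
    · simp [Sym2.eq_swap]
    · fin_cases j <;> simp [subdiv3]
    · fin_cases i <;> simp [subdiv3]
    · fin_cases i <;> fin_cases j <;> simp [subdiv3]

variable {T : Finset (V ⊕ Fin 3)}

theorem IsDomSet.subdiv3_exists_inr_mem (hT : IsDomSet (subdiv3 G u v) T) :
    ∃ i, Sum.inr i ∈ T := by
  rcases hT (.inr 1) with h | ⟨a | i, hy, hadj⟩
  · exact ⟨1, h⟩
  · simp [subdiv3] at hadj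
  · exact ⟨i, hy⟩

theorem IsDomSet.subdiv3_inr_zero_mem_or (hT : IsDomSet (subdiv3 G u v) T) :
    Sum.inr 0 ∈ T ∨ Sum.inr 1 ∈ T ∨ Sum.inl u ∈ T := by
  rcases hT (.inr 0) with h | ⟨a | i, hy, hadj⟩
  · exact Or.inl h
  · obtain rfl : a = u := by simpa [subdiv3] using hadj
    exact Or.inr (Or.inr hy)
  · obtain rfl : i = 1 := by fin_cases i <;> simp [subdiv3] at hadj ⊢
    exact Or.inr (Or.inl hy)

theorem IsDomSet.subdiv3_inr_two_mem_or (hT : IsDomSet (subdiv3 G u v) T) :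
    Sum.inr 2 ∈ T ∨ Sum.inr 1 ∈ T ∨ Sum.inl v ∈ T := by
  rcases hT (.inr 2) with h | ⟨a | i, hy, hadj⟩
  · exact Or.inl h
  · obtain rfl : a = v := by simpa [subdiv3] using hadj
    exact Or.inr (Or.inr hy)
  · obtain rfl : i = 1 := by fin_cases i <;> simp [subdiv3] at hadj ⊢
    exact Or.inr (Or.inl hy)

theorem IsDomSet.subdiv3_insert_toLeft [DecidableEq V] (huv : G.Adj u v)
    (hT : IsDomSet (subdiv3 G u v) T) : IsDomSet G (insert u T.toLeft) := by
  intro x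
  rcases hT (.inl x) with hx | ⟨y | i, hy, hyx⟩
  · exact Or.inl (Finset.mem_insert_of_mem (Finset.mem_toLeft.mpr hx))
  · exact Or.inr ⟨y, Finset.mem_insert_of_mem (Finset.mem_toLeft.mpr hy),
      (subdiv3_adj_inl_inl.mp hyx).1⟩
  · rcases subdiv3_adj_inr_inl.mp hyx with ⟨rfl, -⟩ | ⟨rfl, -⟩
    · exact Or.inl (Finset.mem_insert_self _ _)
    · exact Or.inr ⟨u, Finset.mem_insert_self _ _, huv⟩

theorem IsDomSet.subdiv3_toLeft (huv : G.Adj u v) (hT : IsDomSet (subdiv3 G u v) T)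
    (hR : T.toRight.card ≤ 1) : IsDomSet G T.toLeft := by
  have hunique : ∀ i j, Sum.inr i ∈ T → Sum.inr j ∈ T → i = j := fun i j hi hj =>
    Finset.card_le_one.mp hR i (Finset.mem_toRight.mpr hi) j (Finset.mem_toRight.mpr hj)
  intro x
  rcases hT (.inl x) with hx | ⟨y | i, hy, hyx⟩
  · exact Or.inl (Finset.mem_toLeft.mpr hx)
  · exact Or.inr ⟨y, Finset.mem_toLeft.mpr hy, (subdiv3_adj_inl_inl.mp hyx).1⟩
  · -- `v'` (resp. `u'`) cannot be dominated by the only subdivision vertex `u'` (resp. `v'`)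
    rcases subdiv3_adj_inr_inl.mp hyx with ⟨rfl, rfl⟩ | ⟨rfl, rfl⟩
    · obtain h | h | hv := hT.subdiv3_inr_two_mem_or
      · exact absurd (hunique _ _ hy h) (by decide)
      · exact absurd (hunique _ _ hy h) (by decide)
      · exact Or.inr ⟨v, Finset.mem_toLeft.mpr hv, huv.symm⟩
    · obtain h | h | hu := hT.subdiv3_inr_zero_mem_or
      · exact absurd (hunique _ _ hy h) (by decide)
      · exact absurd (hunique _ _ hy h) (by decide)
      · exact Or.inr ⟨u, Finset.mem_toLeft.mpr hu, huv⟩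

theorem domNum_add_one_le_card_of_isDomSet_subdiv3 (huv : G.Adj u v)
    (hT : IsDomSet (subdiv3 G u v) T) : domNum G + 1 ≤ T.card := by
  classical
  rw [← Finset.card_toLeft_add_card_toRight (u := T)]
  obtain ⟨i, hi⟩ := hT.subdiv3_exists_inr_mem
  have hR : 0 < T.toRight.card := Finset.card_pos.mpr ⟨i, Finset.mem_toRight.mpr hi⟩
  by_cases hR1 : T.toRight.card ≤ 1
  · have := domNum_le_card (hT.subdiv3_toLeft huv hR1)
    omega
  · have := domNum_le_card (hT.subdiv3_insert_toLeft huv)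
    have := Finset.card_insert_le u T.toLeft
    omega

variable {S : Finset V}

theorem IsDomSet.subdiv3_disjSum_one (hS : IsDomSet (G.deleteEdges {s(u, v)}) S) :
    IsDomSet (subdiv3 G u v) (S.disjSum {1}) := by
  rintro (x | i)
  · rcases hS x with hx | ⟨z, hz, hzx⟩
    · exact Or.inl (Finset.inl_mem_disjSum.mpr hx)
    · rw [deleteEdges_adj, Set.mem_singleton_iff] at hzx
      exact Or.inr ⟨.inl z, Finset.inl_mem_disjSum.mpr hz, subdiv3_adj_inl_inl.mpr hzx⟩
  · fin_cases i <;> simp [subdiv3, Sum.exists]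

theorem IsDomSet.subdiv3_disjSum_zero (hS : IsDomSet G S) (hv : v ∈ S) :
    IsDomSet (subdiv3 G u v) (S.disjSum {0}) := by
  rintro (x | i)
  · rcases hS x with hx | ⟨z, hz, hzx⟩
    · exact Or.inl (Finset.inl_mem_disjSum.mpr hx)
    · by_cases he : s(z, x) = s(u, v)
      · rcases Sym2.eq_iff.mp he with ⟨-, rfl⟩ | ⟨-, rfl⟩
        · exact Or.inl (Finset.inl_mem_disjSum.mpr hv)
        · exact Or.inr ⟨.inr 0, by simp, by simp⟩
      · exact Or.inr ⟨.inl z, Finset.inl_mem_disjSum.mpr hz, subdiv3_adj_inl_inl.mpr ⟨hzx, he⟩⟩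
  · fin_cases i <;> simp [subdiv3, Sum.exists, hv]

theorem IsDomSet.subdiv3_disjSum_two (hS : IsDomSet G S) (hu : u ∈ S) :
    IsDomSet (subdiv3 G u v) (S.disjSum {2}) := by
  convert (hS.subdiv3_disjSum_zero (u := v) hu).map (subdiv3Swap G v u)
  ext (x | i)
  · simp [subdiv3Swap]
  · fin_cases i <;> simp [subdiv3Swap]

theorem domNum_subdiv3 [Fintype V] (huv : G.Adj u v) :
    domNum (subdiv3 G u v) = domNum G + 1 := by
  obtain ⟨S, hS, hcard⟩ := exists_isDomSet_card_eq_domNum G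
  obtain ⟨i, hSi⟩ : ∃ i : Fin 3, IsDomSet (subdiv3 G u v) (S.disjSum {i}) := by
    by_cases hv : v ∈ S
    · exact ⟨0, hS.subdiv3_disjSum_zero hv⟩
    by_cases hu : u ∈ S
    · exact ⟨2, hS.subdiv3_disjSum_two hu⟩
    · exact ⟨1, (hS.deleteEdges_of_notMem hu hv).subdiv3_disjSum_one⟩
  obtain ⟨T, hT, hTcard⟩ := exists_isDomSet_card_eq_domNum (subdiv3 G u v)
  have hle := domNum_le_card hSi
  rw [Finset.card_disjSum, Finset.card_singleton, hcard] at hle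
  have hge := domNum_add_one_le_card_of_isDomSet_subdiv3 huv hT
  omega

end Subdivision

theorem stmt9_general {V : Type*} [Fintype V] (G : SimpleGraph V)
    (u v : V) (huv : G.Adj u v) :
    ((∃ S : Finset V, IsDomSet G S ∧ S.card = domNum G ∧ v ∈ S) →
      ∃ T : Finset (V ⊕ Fin 3), IsDomSet (subdiv3 G u v) T ∧
        T.card = domNum (subdiv3 G u v) ∧ (Sum.inr 0 : V ⊕ Fin 3) ∈ T) ∧
    ((∃ S : Finset V, IsDomSet G S ∧ S.card = domNum G ∧ u ∈ S) →
      ∃ T : Finset (V ⊕ Fin 3), IsDomSet (subdiv3 G u v) T ∧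
        T.card = domNum (subdiv3 G u v) ∧ (Sum.inr 2 : V ⊕ Fin 3) ∈ T) ∧
    (domNum (G.deleteEdges {s(u, v)}) = domNum G →
      ∃ T : Finset (V ⊕ Fin 3), IsDomSet (subdiv3 G u v) T ∧
        T.card = domNum (subdiv3 G u v) ∧ (Sum.inr 1 : V ⊕ Fin 3) ∈ T) := by
  have extend : ∀ {S : Finset V} {i : Fin 3}, S.card = domNum G →
      IsDomSet (subdiv3 G u v) (S.disjSum {i}) →
      ∃ T : Finset (V ⊕ Fin 3), IsDomSet (subdiv3 G u v) T ∧
        T.card = domNum (subdiv3 G u v) ∧ Sum.inr i ∈ T := fun hcard hT =>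
    ⟨_, hT, by rw [Finset.card_disjSum, Finset.card_singleton, hcard, domNum_subdiv3 huv],
      Finset.inr_mem_disjSum.mpr (Finset.mem_singleton_self _)⟩
  refine ⟨?_, ?_, fun hcrit => ?_⟩
  · rintro ⟨S, hS, hcard, hv⟩
    exact extend hcard (hS.subdiv3_disjSum_zero hv)
  · rintro ⟨S, hS, hcard, hu⟩
    exact extend hcard (hS.subdiv3_disjSum_two hu)
  · obtain ⟨S, hS, hcard⟩ := exists_isDomSet_card_eq_domNum (G.deleteEdges {s(u, v)})
    exact extend (hcard.trans hcrit) hS.subdiv3_disjSum_one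

/-- Let `H` be the `3`-subdivision of the edge `uv` of `G`, with new vertices
`u' = Sum.inr 0`, `w = Sum.inr 1`, `v' = Sum.inr 2`. Then:
(i) if `v` is in some minimum dominating set of `G`, then `u'` is in some minimum
dominating set of `H`; (ii) if `u` is in some minimum dominating set of `G`, then `v'`
is in some minimum dominating set of `H`; (iii) if `uv` is not `γ`-critical in `G`,
then `w` is in some minimum dominating set of `H`. -/
theorem stmt9 {V : Type*} [Fintype V] [DecidableEq V] (G : SimpleGraph V)
    (u v : V) (huv : G.Adj u v) :
    ((∃ S : Finset V, IsDomSet G S ∧ S.card = domNum G ∧ v ∈ S) →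
      ∃ T : Finset (V ⊕ Fin 3), IsDomSet (subdiv3 G u v) T ∧
        T.card = domNum (subdiv3 G u v) ∧ (Sum.inr 0 : V ⊕ Fin 3) ∈ T) ∧
    ((∃ S : Finset V, IsDomSet G S ∧ S.card = domNum G ∧ u ∈ S) →
      ∃ T : Finset (V ⊕ Fin 3), IsDomSet (subdiv3 G u v) T ∧
        T.card = domNum (subdiv3 G u v) ∧ (Sum.inr 2 : V ⊕ Fin 3) ∈ T) ∧
    (domNum (G.deleteEdges {s(u, v)}) = domNum G →
      ∃ T : Finset (V ⊕ Fin 3), IsDomSet (subdiv3 G u v) T ∧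
        T.card = domNum (subdiv3 G u v) ∧ (Sum.inr 1 : V ⊕ Fin 3) ∈ T) :=
  stmt9_general G u v huv
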